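/- arXiv:2010.06129 — 2 statements merged into one kernel-verified Lean document; each statement's English description precedes it below -/
import Mathlib

section
/- Let 0<ε_0<1/10, R_0>0, 0<δ_0<π/2, and let A∈ℂ satisfy Re(√−1·A)>0 and Re(√−1·A·e^{√−1(1−ε_0)π})>0. Define g(w)=w+A·w^{1−ε_0} on X(R_0,δ_0). Then there exists B_0>0 such that g restricts to a holomorphic bijection from {w∈X(R_0,δ_0): Im g(w)≥B_0} onto {ζ∈ℂ: Im ζ≥B_0}. -/
/-!
Write `g = id + F` with `F w = A w^{1-ε₀}`. On a half-plane `{c ≤ Im w}` we have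
`|F'(w)| ≤ |A| c^{-ε₀}`, so for `c` large `F` is a contraction there: `g` is injective on it, and
`g w = ζ` can be solved by the contraction principle on any closed ball inside it around
`ζ - F ζ` of radius comparable to `|F ζ|`. With `w = r e^{iθ}`,
`Im F(w) = r^{1-ε₀} Im(A e^{i(1-ε₀)θ})`; the hypotheses on `A` make this angular factor negative
near `θ = 0` and `θ = π`, and away from those angles `|sin θ|` is bounded below, so
`r^{1-ε₀}` is dominated by `|Im w| = r |sin θ|`. This gives
`Im F(w) + μ |F(w)| ≤ |Im w| / 2 + C`, which forces `Im w ≥ c` whenever `Im g(w) ≥ 4c`, and puts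
the required ball around `ζ - F ζ` inside the half-plane.
-/

/-- The branch of `log` on the sector around the positive imaginary axis:
`log w = log(-i w) + iπ/2`. -/
noncomputable def logS (w : ℂ) : ℂ :=
  Complex.log (-Complex.I * w) + (Real.pi / 2 : ℝ) * Complex.I

/-- The branch of the power `w ^ κ = exp (κ log w)` on the sector around the
positive imaginary axis. -/
noncomputable def powS (w : ℂ) (κ : ℝ) : ℂ := Complex.exp ((κ : ℂ) * logS w)

/-- The sector `X(R,δ) = {w : |w| > R, arg w ∈ (-δ, π + δ)}` around the positive
imaginary axis. -/
def sectorX (R δ : ℝ) : Set ℂ :=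
  {w : ℂ | R < ‖w‖ ∧ |Complex.arg (-Complex.I * w)| < Real.pi / 2 + δ}

open Complex Set Filter Topology Metric
open scoped NNReal Real

section powS

variable {w : ℂ}

lemma logS_re (w : ℂ) : (logS w).re = Real.log ‖w‖ := by
  simp [logS, log_re]

lemma logS_im (w : ℂ) : (logS w).im = arg (-I * w) + π / 2 := by
  simp [logS, log_im]

lemma exp_logS (hw : w ≠ 0) : exp (logS w) = w := by
  rw [logS, exp_add, exp_log (by simpa using hw), ofReal_div, ofReal_ofNat, exp_pi_div_two_mul_I]
  ring_nf
  simp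

lemma neg_pi_div_two_lt_logS_im (w : ℂ) : -(π / 2) < (logS w).im := by
  rw [logS_im]; linarith [neg_pi_lt_arg (-I * w)]

lemma logS_im_le (w : ℂ) : (logS w).im ≤ 3 * π / 2 := by
  rw [logS_im]; linarith [arg_le_pi (-I * w)]

lemma im_eq_norm_mul_sin_logS_im (hw : w ≠ 0) : w.im = ‖w‖ * Real.sin (logS w).im := by
  conv_lhs => rw [← exp_logS hw]
  rw [exp_im, logS_re, Real.exp_log (norm_pos_iff.2 hw)]

lemma norm_powS (hw : w ≠ 0) (κ : ℝ) : ‖powS w κ‖ = ‖w‖ ^ κ := by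
  rw [powS, norm_exp, re_ofReal_mul, logS_re, Real.rpow_def_of_pos (norm_pos_iff.2 hw), mul_comm]

lemma powS_eq_rpow_mul_exp (hw : w ≠ 0) (κ : ℝ) :
    powS w κ = (‖w‖ ^ κ : ℝ) * exp ((κ * (logS w).im : ℝ) * I) := by
  have h : (κ : ℂ) * logS w = (κ * (logS w).re : ℝ) + (κ * (logS w).im : ℝ) * I := by
    apply Complex.ext <;> simp
  rw [powS, h, exp_add, ← ofReal_exp, logS_re, Real.rpow_def_of_pos (norm_pos_iff.2 hw), mul_comm κ]

lemma im_mul_powS (A : ℂ) (hw : w ≠ 0) (κ : ℝ) :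
    (A * powS w κ).im = ‖w‖ ^ κ * (A * exp ((κ * (logS w).im : ℝ) * I)).im := by
  rw [powS_eq_rpow_mul_exp hw, mul_left_comm, im_ofReal_mul]

lemma hasDerivAt_powS (κ : ℝ) (hw : -I * w ∈ slitPlane) :
    HasDerivAt (fun z ↦ powS z κ) (κ * powS w (κ - 1)) w := by
  have hw0 : w ≠ 0 := by rintro rfl; simp at hw
  have hlog : HasDerivAt logS w⁻¹ w :=
    ((((hasDerivAt_id w).const_mul (-I)).clog hw).add_const _).congr_deriv
      (by simp [div_mul_cancel_left₀ I_ne_zero])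
  refine (hlog.const_mul (κ : ℂ)).cexp.congr_deriv ?_
  rw [powS, ofReal_sub, ofReal_one, sub_mul, one_mul, exp_sub, exp_logS hw0]
  ring

end powS

lemma Real.sin_le_abs_sin_of_le_abs {η t : ℝ} (hη : 0 ≤ η) (h : η ≤ |t|) (ht : |t| ≤ π / 2) :
    Real.sin η ≤ |Real.sin t| := by
  rw [Real.abs_sin_eq_sin_abs_of_abs_le_pi (by linarith [Real.pi_pos])]
  exact Real.sin_le_sin_of_le_of_le_pi_div_two (by linarith [Real.pi_pos]) ht h

lemma Real.sin_le_abs_sin_of_le_abs_of_le_abs_sub_pi {η t : ℝ} (hη : 0 ≤ η)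
    (ht₁ : -(π / 2) ≤ t) (ht₂ : t ≤ 3 * π / 2) (h₀ : η ≤ |t|) (hπ : η ≤ |t - π|) :
    Real.sin η ≤ |Real.sin t| := by
  rcases le_total t (π / 2) with h | h
  · exact Real.sin_le_abs_sin_of_le_abs hη h₀ (abs_le.2 ⟨ht₁, h⟩)
  · rw [← abs_neg, ← Real.sin_sub_pi]
    exact Real.sin_le_abs_sin_of_le_abs hη hπ (abs_le.2 ⟨by linarith, by linarith⟩)

lemma Continuous.exists_forall_near_le_neg {ψ : ℝ → ℝ} (hψ : Continuous ψ) {x y : ℝ}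
    (hx : ψ x < 0) (hy : ψ y < 0) :
    ∃ η > 0, ∃ m > 0, ∀ t, |t - x| < η ∨ |t - y| < η → ψ t ≤ -m := by
  set m := min (-ψ x) (-ψ y) / 2 with hm_def
  have hm : 0 < m := half_pos (lt_min (neg_pos.2 hx) (neg_pos.2 hy))
  have near : ∀ z, ψ z < -m → ∃ η > 0, ∀ t, |t - z| < η → ψ t ≤ -m := fun z hz ↦ by
    obtain ⟨η, hη, h⟩ := Metric.eventually_nhds_iff.1
      (hψ.continuousAt.eventually_lt continuousAt_const hz)
    exact ⟨η, hη, fun t ht ↦ (h (by rwa [Real.dist_eq])).le⟩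
  obtain ⟨η₁, hη₁, h₁⟩ := near x (by linarith [min_le_left (-ψ x) (-ψ y)])
  obtain ⟨η₂, hη₂, h₂⟩ := near y (by linarith [min_le_right (-ψ x) (-ψ y)])
  refine ⟨min η₁ η₂, lt_min hη₁ hη₂, m, hm, fun t ht ↦ ?_⟩
  rcases ht with ht | ht
  · exact h₁ t (ht.trans_le (min_le_left _ _))
  · exact h₂ t (ht.trans_le (min_le_right _ _))

lemma tendsto_mul_rpow_sub_one_atTop (a : ℝ) {κ : ℝ} (hκ : κ < 1) :
    Tendsto (fun r : ℝ ↦ a * r ^ (κ - 1)) atTop (𝓝 0) := by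
  simpa [neg_sub] using (tendsto_rpow_neg_atTop (sub_pos.2 hκ)).const_mul a

lemma exists_mul_rpow_le_mul_add {κ : ℝ} (hκ₀ : 0 ≤ κ) (hκ₁ : κ < 1) (b : ℝ) {s : ℝ}
    (hs : 0 < s) : ∃ C ≥ 0, ∀ r ≥ 0, b * r ^ κ ≤ s * r + C := by
  obtain ⟨R, hR⟩ := eventually_atTop.1
    (((tendsto_mul_rpow_sub_one_atTop |b| hκ₁).eventually (gt_mem_nhds hs)).and
      (eventually_gt_atTop 0))
  set R₀ := max R 0
  refine ⟨|b| * R₀ ^ κ, by positivity, fun r hr ↦ ?_⟩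
  have hb : b * r ^ κ ≤ |b| * r ^ κ := by gcongr; exact le_abs_self b
  rcases le_total r R₀ with hrR | hRr
  · have : |b| * r ^ κ ≤ |b| * R₀ ^ κ := by gcongr
    nlinarith
  · obtain ⟨hsmall, hr₀⟩ := hR r (le_of_max_le_left hRr)
    have : |b| * r ^ κ = |b| * r ^ (κ - 1) * r := by
      rw [Real.rpow_sub_one hr₀.ne', mul_assoc, div_mul_cancel₀ _ hr₀.ne']
    nlinarith [abs_nonneg b, Real.rpow_nonneg (le_max_right R 0) κ]

lemma exists_im_mul_powS_add_le {A : ℂ} {κ : ℝ} (hκ₀ : 0 ≤ κ) (hκ₁ : κ < 1) (h₀ : A.im < 0)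
    (hπ : (A * exp ((κ * π : ℝ) * I)).im < 0) :
    ∃ μ > 0, μ ≤ 1 ∧ ∃ C ≥ 0,
      ∀ w ≠ 0, (A * powS w κ).im + μ * ‖A * powS w κ‖ ≤ |w.im| / 2 + C := by
  set ψ : ℝ → ℝ := fun t ↦ (A * exp ((κ * t : ℝ) * I)).im
  have hψA : ∀ t, ψ t ≤ ‖A‖ := fun t ↦
    (im_le_norm _).trans (by rw [norm_mul, norm_exp_ofReal_mul_I, mul_one])
  have hA : 0 < ‖A‖ := norm_pos_iff.2 (by rintro rfl; simp at h₀)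
  obtain ⟨η, hη, m, hm, hnear⟩ :=
    (show Continuous ψ by fun_prop).exists_forall_near_le_neg (x := 0) (y := π)
      (by simpa [ψ] using h₀) hπ
  set η' := min η (π / 2)
  have hη' : 0 < η' := lt_min hη (by positivity)
  have hsin : 0 < Real.sin η' :=
    Real.sin_pos_of_pos_of_lt_pi hη' (by linarith [min_le_right η (π / 2), Real.pi_pos])
  obtain ⟨C, hC, hCr⟩ := exists_mul_rpow_le_mul_add hκ₀ hκ₁ (‖A‖ + m / 2) (half_pos hsin)
  refine ⟨min (m / (2 * ‖A‖)) 1, by positivity, min_le_right _ _, C, hC, fun w hw ↦ ?_⟩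
  have hμ : min (m / (2 * ‖A‖)) 1 * ‖A * powS w κ‖ ≤ m / 2 * ‖w‖ ^ κ := by
    calc _ ≤ m / (2 * ‖A‖) * ‖A * powS w κ‖ := by gcongr; exact min_le_left _ _
      _ = m / 2 * ‖w‖ ^ κ := by rw [norm_mul, norm_powS hw]; field_simp
  rw [im_mul_powS A hw]
  refine (add_le_add le_rfl hμ).trans ?_
  set θ := (logS w).im
  have hr : 0 ≤ ‖w‖ ^ κ := by positivity
  by_cases hθ : |θ - 0| < η ∨ |θ - π| < η
  · nlinarith [hnear θ hθ, abs_nonneg w.im]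
  push Not at hθ
  rw [sub_zero] at hθ
  have hsinθ : Real.sin η' ≤ |Real.sin θ| :=
    Real.sin_le_abs_sin_of_le_abs_of_le_abs_sub_pi hη'.le (neg_pi_div_two_lt_logS_im w).le
      (logS_im_le w) ((min_le_left _ _).trans hθ.1) ((min_le_left _ _).trans hθ.2)
  have him : |w.im| = ‖w‖ * |Real.sin θ| := by
    rw [im_eq_norm_mul_sin_logS_im hw, abs_mul, abs_norm]
  calc ‖w‖ ^ κ * ψ θ + m / 2 * ‖w‖ ^ κ ≤ (‖A‖ + m / 2) * ‖w‖ ^ κ := by nlinarith [hψA θ]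
    _ ≤ Real.sin η' / 2 * ‖w‖ + C := hCr _ (norm_nonneg w)
    _ ≤ |w.im| / 2 + C := by rw [him]; nlinarith [norm_nonneg w]

lemma neg_I_mul_mem_slitPlane {w : ℂ} (hw : 0 < w.im) : -I * w ∈ slitPlane :=
  Or.inl (by simpa using hw)

lemma lipschitzOnWith_mul_powS (A : ℂ) {κ c : ℝ} (hκ₀ : 0 ≤ κ) (hκ₁ : κ ≤ 1) (hc : 0 < c) :
    LipschitzOnWith (‖A‖ * c ^ (κ - 1)).toNNReal (fun w ↦ A * powS w κ) {w | c ≤ w.im} := by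
  refine LipschitzOnWith.of_dist_le' fun x hx y hy ↦ ?_
  rw [dist_eq_norm, dist_eq_norm]
  refine (convex_halfSpace_im_ge c).norm_image_sub_le_of_norm_hasDerivWithin_le
    (fun z hz ↦ ((hasDerivAt_powS κ (neg_I_mul_mem_slitPlane (hc.trans_le hz))).const_mul
      A).hasDerivWithinAt) (fun z (hz : c ≤ z.im) ↦ ?_) hy hx
  have hz₀ : z ≠ 0 := by rintro rfl; simp at hz; linarith
  rw [norm_mul, norm_mul, norm_powS hz₀, norm_real, Real.norm_of_nonneg hκ₀]
  have : ‖z‖ ^ (κ - 1) ≤ c ^ (κ - 1) :=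
    Real.rpow_le_rpow_of_nonpos hc (hz.trans (im_le_norm z)) (by linarith)
  have : 0 ≤ ‖z‖ ^ (κ - 1) := by positivity
  gcongr
  nlinarith

lemma eventually_lipschitzOnWith_mul_powS (A : ℂ) {κ : ℝ} (hκ₀ : 0 ≤ κ) (hκ₁ : κ < 1) {K : ℝ≥0}
    (hK : 0 < K) : ∀ᶠ c in atTop, LipschitzOnWith K (fun w ↦ A * powS w κ) {w | c ≤ w.im} := by
  filter_upwards [(tendsto_mul_rpow_sub_one_atTop ‖A‖ hκ₁).eventually (ge_mem_nhds hK),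
    eventually_gt_atTop 0] with c hcK hc
  exact (lipschitzOnWith_mul_powS A hκ₀ hκ₁.le hc).weaken (Real.toNNReal_le_iff_le_coe.2 hcK)

section PerturbationOfIdentity

variable {E : Type*} [NormedAddCommGroup E] {F : E → E} {s : Set E} {K : ℝ≥0}

lemma LipschitzOnWith.injOn_id_add (hF : LipschitzOnWith K F s) (hK : K < 1) :
    InjOn (fun x ↦ x + F x) s := by
  intro x hx y hy (hxy : x + F x = y + F y)
  have h : ‖x - y‖ ≤ K * ‖x - y‖ :=
    calc ‖x - y‖ = ‖F y - F x‖ := by rw [sub_eq_sub_iff_add_eq_add.2 (by rw [hxy, add_comm])]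
      _ ≤ K * ‖y - x‖ := hF.norm_sub_le hy hx
      _ = K * ‖x - y‖ := by rw [norm_sub_rev]
  have hK' : (K : ℝ) < 1 := by exact_mod_cast hK
  rw [← sub_eq_zero, ← norm_le_zero_iff]
  nlinarith [norm_nonneg (x - y)]

lemma LipschitzOnWith.surjOn_closedBall_id_add [NormedSpace ℝ E] [CompleteSpace E]
    (hF : LipschitzOnWith K F s) {b : E} {ε : ℝ} (hε : 0 ≤ ε) (hball : closedBall b ε ⊆ s) :
    SurjOn (fun x ↦ x + F x) (closedBall b ε) (closedBall (b + F b) ((1 - K) * ε)) := by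
  have happrox : ApproximatesLinearOn (fun x ↦ x + F x) (ContinuousLinearMap.id ℝ E) s K := by
    rw [ApproximatesLinearOn.approximatesLinearOn_iff_lipschitzOnWith]
    convert hF using 1
    ext x
    simp
  simpa using happrox.surjOn_closedBall_of_nonlinearRightInverse ⟨id, 1, by simp, by simp⟩ hε hball

end PerturbationOfIdentity

lemma exists_im_ge_add_eq {F : ℂ → ℂ} {K : ℝ≥0} {c μ : ℝ}
    (hF : LipschitzOnWith K F {w | c ≤ w.im}) (hKμ : 2 * K ≤ μ) (hμ : μ ≤ 1)
    {ζ : ℂ} (hζ : c ≤ ζ.im) (hFζ : c ≤ ζ.im - (F ζ).im - μ * ‖F ζ‖) :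
    ∃ x, c ≤ x.im ∧ x + F x = ζ := by
  have hμ₀ : 0 ≤ μ := by linarith [K.2]
  set ρ := μ * ‖F ζ‖
  have hρ : 0 ≤ ρ := by positivity
  have hball : closedBall (ζ - F ζ) ρ ⊆ {w | c ≤ w.im} := fun y hy ↦ by
    have := (abs_le.1 ((abs_im_le_norm _).trans (mem_closedBall_iff_norm.1 hy))).1
    rw [sub_im, sub_im] at this
    show c ≤ y.im
    linarith
  have hζball : ζ ∈ closedBall (ζ - F ζ + F (ζ - F ζ)) ((1 - K) * ρ) := by
    rw [mem_closedBall_iff_norm]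
    calc ‖ζ - (ζ - F ζ + F (ζ - F ζ))‖ = ‖F ζ - F (ζ - F ζ)‖ := by congr 1; abel
      _ ≤ K * ‖ζ - (ζ - F ζ)‖ := hF.norm_sub_le hζ (hball (mem_closedBall_self hρ))
      _ = K * ‖F ζ‖ := by rw [sub_sub_cancel]
      _ ≤ (1 - K) * ρ := by nlinarith [norm_nonneg (F ζ)]
  obtain ⟨x, hx, hxζ⟩ := hF.surjOn_closedBall_id_add hρ hball hζball
  exact ⟨x, hball hx, hxζ⟩

section sectorX

variable {R δ : ℝ} {w : ℂ}

lemma ne_zero_of_mem_sectorX (hR : 0 ≤ R) (hw : w ∈ sectorX R δ) : w ≠ 0 := by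
  rintro rfl
  exact (hR.trans_lt hw.1).ne' norm_zero

lemma neg_I_mul_mem_slitPlane_of_mem_sectorX (hR : 0 ≤ R) (hδ : δ < π / 2)
    (hw : w ∈ sectorX R δ) : -I * w ∈ slitPlane := by
  refine mem_slitPlane_iff_arg.2 ⟨fun h ↦ ?_, by simpa using ne_zero_of_mem_sectorX hR hw⟩
  have := hw.2
  rw [h, abs_of_pos Real.pi_pos] at this
  linarith

lemma mem_sectorX_of_lt_im (hδ : 0 ≤ δ) (hR : R < w.im) (hw : 0 < w.im) : w ∈ sectorX R δ := by
  refine ⟨hR.trans_le ((le_abs_self _).trans (abs_im_le_norm w)), ?_⟩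
  have := abs_arg_lt_pi_div_two_iff.2 (Or.inl (by simpa using hw) : 0 < (-I * w).re ∨ _)
  linarith

lemma differentiableOn_powS_sectorX (κ : ℝ) (hR : 0 ≤ R) (hδ : δ < π / 2) :
    DifferentiableOn ℂ (fun w ↦ powS w κ) (sectorX R δ) := fun _ hw ↦
  (hasDerivAt_powS κ (neg_I_mul_mem_slitPlane_of_mem_sectorX hR hδ hw)).differentiableAt
    |>.differentiableWithinAt

end sectorX

lemma le_im_of_four_mul_le_im_add {w z : ℂ} {c C : ℝ} (hc : 0 < c) (hC : C ≤ c)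
    (hz : z.im ≤ |w.im| / 2 + C) (h : 4 * c ≤ (w + z).im) : c ≤ w.im := by
  rw [add_im] at h
  cases abs_cases w.im <;> linarith

/-- `g(w) = w + A w^{1-ε₀}` is a holomorphic bijection from the part
of the sector where `Im g(w) ≥ B₀` onto the half plane `{Im ζ ≥ B₀}`. -/
theorem coordinate_bijection
    (ε₀ : ℝ) (hε₀0 : 0 < ε₀) (hε₀1 : ε₀ < 1 / 10)
    (R₀ : ℝ) (hR₀ : 0 < R₀) (δ₀ : ℝ) (hδ₀0 : 0 < δ₀) (hδ₀1 : δ₀ < Real.pi / 2)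
    (A : ℂ) (hA1 : 0 < (Complex.I * A).re)
    (hA2 : 0 < (Complex.I * A * Complex.exp ((((1 - ε₀) * Real.pi : ℝ)) * Complex.I)).re)
    (g : ℂ → ℂ) (hg : ∀ w : ℂ, g w = w + A * powS w (1 - ε₀)) :
    ∃ B₀ : ℝ, 0 < B₀ ∧
      DifferentiableOn ℂ g (sectorX R₀ δ₀) ∧
      Set.BijOn g {w : ℂ | w ∈ sectorX R₀ δ₀ ∧ B₀ ≤ (g w).im}
        {ζ : ℂ | B₀ ≤ ζ.im} := by
  obtain rfl : g = fun w ↦ w + A * powS w (1 - ε₀) := funext hg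
  rw [I_mul_re] at hA1
  rw [mul_assoc, I_mul_re] at hA2
  obtain ⟨μ, hμ, hμ₁, C, hC, hbound⟩ := exists_im_mul_powS_add_le (A := A) (κ := 1 - ε₀)
    (by linarith) (by linarith) (by linarith) (by linarith)
  set K := (μ / 2).toNNReal
  have hKμ : 2 * (K : ℝ) ≤ μ := by rw [Real.coe_toNNReal _ (by positivity)]; linarith
  obtain ⟨c, hcR, hcC, hlip⟩ := ((eventually_gt_atTop R₀).and ((eventually_ge_atTop C).and
    (eventually_lipschitzOnWith_mul_powS A (κ := 1 - ε₀) (by linarith) (by linarith)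
      (show 0 < K by positivity)))).exists
  have hc : 0 < c := hR₀.trans hcR
  refine ⟨4 * c, by positivity,
    differentiableOn_id.add ((differentiableOn_powS_sectorX _ hR₀.le hδ₀1).const_mul A),
    fun w hw ↦ hw.2, ?_, fun ζ (hζ : 4 * c ≤ ζ.im) ↦ ?_⟩
  · refine (hlip.injOn_id_add (Real.toNNReal_lt_one.2 (by linarith))).mono fun w ⟨hw, h⟩ ↦ ?_
    have := hbound w (ne_zero_of_mem_sectorX hR₀.le hw)
    have := mul_nonneg hμ.le (norm_nonneg (A * powS w (1 - ε₀)))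
    exact le_im_of_four_mul_le_im_add hc hcC (by linarith) h
  · have hζ₀ : 0 < ζ.im := by linarith
    obtain ⟨x, hx, rfl⟩ := exists_im_ge_add_eq (ζ := ζ) hlip hKμ hμ₁ (by linarith)
      (by linarith [hbound ζ (fun h ↦ by simp [h] at hζ₀), abs_of_pos hζ₀])
    exact ⟨x, ⟨mem_sectorX_of_lt_im hδ₀0.le (hcR.trans_le hx) (hc.trans_le hx), hζ⟩, rfl⟩
end

section
/- Let U⊆ℂ be an open neighbourhood of 0, let α: U→ℂ be a nowhere-vanishing holomorphic function, and let m and r be positive integers. Then there exist an open neighbourhood U_1⊆U of 0 and a holomorphic function ζ on U_1 with ζ(0)=0 and ζ'(0)=1 such that ζ(z)^{m−r}·ζ'(z)^r·α(0) = z^{m−r}·α(z) for all z∈U_1∖{0} (equivalently, α(0)·ζ^m·(dζ/ζ)^r = z^m·α·(dz/z)^r as meromorphic r-differentials). Moreover the germ of ζ at 0 with these properties is unique. -/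
/-!
Write `ζ = z * h` with `h 0 = 1` and put `ψ = h ^ (m / r)`. Since `r ψ'/ψ = m h'/h`, one has
`m ^ r * ζ ^ (m - r) * ζ' ^ r = z ^ (m - r) * (m ψ + r z ψ') ^ r`, so the normal-form equation says
that `m ψ + r z ψ'` is an `r`-th root of `m ^ r * α / α 0`; near `0` this pins it down to
`m γ` with `γ = (α / α 0) ^ (1 / r)`. This Euler-type equation is solved coefficientwise by
`ψₙ = m γₙ / (m + r n)`, and its solution is unique. Finally `h` is determined near `0` by
`h ^ m = ψ ^ r` and `h 0 = 1`.
-/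

open Filter Topology
open scoped ENNReal

section PowerSeries
variable {𝕜 E F : Type*} [NontriviallyNormedField 𝕜] [NormedAddCommGroup E] [NormedSpace 𝕜 E]
  [NormedAddCommGroup F] [NormedSpace 𝕜 F]

theorem FormalMultilinearSeries.radius_le_radius_of_norm_le {p q : FormalMultilinearSeries 𝕜 E F}
    (h : ∀ n, ‖q n‖ ≤ ‖p n‖) : p.radius ≤ q.radius :=
  ENNReal.le_of_forall_nnreal_lt fun ρ hρ => by
    obtain ⟨C, -, hC⟩ := p.norm_mul_pow_le_of_lt_radius hρ
    exact q.le_radius_of_bound C fun n =>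
      (mul_le_mul_of_nonneg_right (h n) (by positivity)).trans (hC n)

theorem HasFPowerSeriesOnBall.hasSum_nsmul_eq_smul_deriv [CompleteSpace F] {f : 𝕜 → F}
    {p : FormalMultilinearSeries 𝕜 𝕜 F} {r : ℝ≥0∞} (hf : HasFPowerSeriesOnBall f p 0 r) {z : 𝕜}
    (hz : z ∈ Metric.eball 0 r) :
    HasSum (fun n => n • p n fun _ => z) (z • deriv f z) := by
  have h := (ContinuousLinearMap.apply 𝕜 F z).hasSum (hf.fderiv.hasSum hz)
  simp only [ContinuousLinearMap.apply_apply, FormalMultilinearSeries.derivSeries_apply_diag,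
    zero_add] at h
  have hz1 : fderiv 𝕜 f z z = z • deriv f z := by
    rw [← fderiv_apply_one_eq_deriv, ← map_smul, smul_eq_mul, mul_one]
  rw [← hasSum_nat_add_iff' 1]
  simpa [hz1] using h

end PowerSeries

noncomputable def eulerOperator (m r : ℕ) (ψ : ℂ → ℂ) (z : ℂ) : ℂ := m * ψ z + r * (z * deriv ψ z)

@[simp]
theorem eulerOperator_apply_zero (m r : ℕ) (ψ : ℂ → ℂ) : eulerOperator m r ψ 0 = m * ψ 0 := by
  simp [eulerOperator]

theorem AnalyticAt.continuousAt_eulerOperator {ψ : ℂ → ℂ} {z₀ : ℂ} (hψ : AnalyticAt ℂ ψ z₀)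
    (m r : ℕ) : ContinuousAt (eulerOperator m r ψ) z₀ :=
  (continuousAt_const.mul hψ.continuousAt).add
    (continuousAt_const.mul (continuousAt_id.mul hψ.deriv.continuousAt))

theorem exists_eulerOperator_eq {m : ℕ} (hm : 0 < m) (r : ℕ) {γ : ℂ → ℂ}
    (hγ : AnalyticAt ℂ γ 0) :
    ∃ ψ, AnalyticAt ℂ ψ 0 ∧ ψ 0 = γ 0 ∧ eulerOperator m r ψ =ᶠ[𝓝 0] fun z => m * γ z := by
  obtain ⟨p, ε, hp⟩ := hγ
  set c : ℕ → ℂ := fun n => m / (m + r * n)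
  have hc_mul (n : ℕ) : c n * (m + r * n) = m := by
    have : (m : ℂ) + r * n ≠ 0 := by exact_mod_cast (by positivity : m + r * n ≠ 0)
    exact div_mul_cancel₀ _ this
  have hc_norm (n : ℕ) : ‖c n‖ ≤ 1 := by
    have : (m : ℂ) + r * n = ((m + r * n : ℕ) : ℂ) := by push_cast; ring
    simp only [c, this, norm_div, Complex.norm_natCast]
    exact div_le_one_of_le₀ (by exact_mod_cast Nat.le_add_right _ _) (by positivity)
  set q : FormalMultilinearSeries ℂ ℂ ℂ := fun n => c n • p n
  have hq : HasFPowerSeriesOnBall q.sum q 0 ε := by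
    have hε : ε ≤ q.radius := hp.r_le.trans <| p.radius_le_radius_of_norm_le fun n => by
      simpa [q, norm_smul] using mul_le_of_le_one_left (norm_nonneg _) (hc_norm n)
    exact (q.hasFPowerSeriesOnBall (hp.r_pos.trans_le hε)).mono hp.r_pos hε
  refine ⟨q.sum, hq.analyticAt, ?_, ?_⟩
  · rw [← hq.coeff_zero 1, ← hp.coeff_zero 1]
    show c 0 • p 0 1 = p 0 1
    simp [c, show (m : ℂ) ≠ 0 by exact_mod_cast hm.ne']
  · filter_upwards [Metric.eball_mem_nhds _ hp.r_pos] with z hz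
    have hsum := ((hq.hasSum hz).mul_left (m : ℂ)).add
      ((hq.hasSum_nsmul_eq_smul_deriv hz).mul_left (r : ℂ))
    have hγ := (hp.hasSum hz).mul_left (m : ℂ)
    rw [zero_add] at hsum hγ
    refine hsum.unique (hγ.congr_fun fun n => ?_)
    simp only [q, smul_apply, smul_eq_mul, nsmul_eq_mul]
    linear_combination (p n fun _ => z) * hc_mul n

theorem eventuallyEq_zero_of_eulerOperator_eventuallyEq_zero {m r : ℕ} (hm : 0 < m) (hr : 0 < r)
    {δ : ℂ → ℂ} (hδ : ∀ᶠ z in 𝓝 0, DifferentiableAt ℂ δ z)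
    (h : eulerOperator m r δ =ᶠ[𝓝 0] 0) : δ =ᶠ[𝓝 0] 0 := by
  obtain ⟨ρ, hρ, hball⟩ := Metric.eventually_nhds_iff_ball.mp (hδ.and h)
  -- `(z ^ m * δ z ^ r)' = z ^ (m - 1) * δ z ^ (r - 1) * eulerOperator m r δ z`
  have hderiv : ∀ z ∈ Metric.ball (0 : ℂ) ρ,
      HasDerivAt (fun w => w ^ m * δ w ^ r) 0 z := by
    intro z hz
    obtain ⟨hd, he⟩ := hball z hz
    refine ((hasDerivAt_pow m z).mul (hd.hasDerivAt.pow r)).congr_deriv ?_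
    obtain ⟨m, rfl⟩ := Nat.exists_eq_add_one_of_ne_zero hm.ne'
    obtain ⟨r, rfl⟩ := Nat.exists_eq_add_one_of_ne_zero hr.ne'
    simp only [eulerOperator, Pi.zero_apply] at he
    simp only [Pi.pow_apply]
    push_cast at he ⊢
    linear_combination (z ^ m * δ z ^ r) * he
  have hconst : ∀ z ∈ Metric.ball (0 : ℂ) ρ, z ^ m * δ z ^ r = 0 := fun z hz => by
    have := Metric.isOpen_ball.is_const_of_deriv_eq_zero (convex_ball (0 : ℂ) ρ).isPreconnected
      (fun w hw => (hderiv w hw).differentiableAt.differentiableWithinAt)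
      (fun w hw => (hderiv w hw).deriv) hz (Metric.mem_ball_self hρ)
    simpa [hm.ne'] using this
  filter_upwards [Metric.ball_mem_nhds 0 hρ] with z hz
  rcases eq_or_ne z 0 with rfl | hz0
  · have := (hball 0 hz).2
    simpa [eulerOperator, hm.ne'] using this
  · simpa [hz0, hr.ne'] using hconst z hz

theorem eventuallyEq_of_eulerOperator_eventuallyEq {m r : ℕ} (hm : 0 < m) (hr : 0 < r)
    {ψ₁ ψ₂ : ℂ → ℂ} (h₁ : ∀ᶠ z in 𝓝 0, DifferentiableAt ℂ ψ₁ z)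
    (h₂ : ∀ᶠ z in 𝓝 0, DifferentiableAt ℂ ψ₂ z)
    (h : eulerOperator m r ψ₁ =ᶠ[𝓝 0] eulerOperator m r ψ₂) : ψ₁ =ᶠ[𝓝 0] ψ₂ := by
  have hδ := eventuallyEq_zero_of_eulerOperator_eventuallyEq_zero hm hr
    (δ := ψ₁ - ψ₂) (h₁.and h₂ |>.mono fun z hz => hz.1.sub hz.2) <| by
      filter_upwards [h₁, h₂, h] with z hz₁ hz₂ hz
      simp only [eulerOperator, Pi.sub_apply, Pi.zero_apply, deriv_sub hz₁ hz₂] at hz ⊢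
      linear_combination hz
  exact hδ.mono fun z hz => sub_eq_zero.mp hz

theorem eventuallyEq_of_pow_eventuallyEq {X 𝕜 : Type*} [TopologicalSpace X] [NormedField 𝕜]
    {f g : X → 𝕜} {x₀ : X} {n : ℕ} (hn : n ≠ 0) (hf : ContinuousAt f x₀) (hg : ContinuousAt g x₀)
    (hfg : f x₀ = g x₀) (hg₀ : g x₀ ≠ 0) (h : ∀ᶠ x in 𝓝 x₀, f x ^ n = g x ^ n) :
    f =ᶠ[𝓝 x₀] g := by
  -- near `x₀`, `f / g` is an `n`-th root of unity close to `1`, and the other roots are isolated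
  have hS : IsClosed ((Polynomial.nthRootsFinset n (1 : 𝕜) : Set 𝕜) \ {1}) :=
    ((Polynomial.nthRootsFinset n (1 : 𝕜)).finite_toSet.sdiff).isClosed
  have hq : ContinuousAt (fun x => f x / g x) x₀ := hf.div hg hg₀
  have hq₀ : f x₀ / g x₀ ∉ (Polynomial.nthRootsFinset n (1 : 𝕜) : Set 𝕜) \ {1} := by
    simp [hfg, div_self hg₀]
  filter_upwards [hq.eventually (hS.isOpen_compl.mem_nhds hq₀), hg.eventually_ne hg₀, h]
    with x hx hgx hfgx
  have hroot : (f x / g x) ^ n = 1 := by rw [div_pow, hfgx, div_self (pow_ne_zero n hgx)]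
  have : f x / g x = 1 := by
    by_contra hne
    exact hx ⟨by simpa [Polynomial.mem_nthRootsFinset (Nat.pos_of_ne_zero hn)] using hroot, hne⟩
  exact (div_eq_one_iff_eq hgx).mp this

theorem AnalyticAt.exists_pow_eq_pow {f : ℂ → ℂ} {z₀ : ℂ} (hf : AnalyticAt ℂ f z₀)
    (hf₀ : f z₀ = 1) (a : ℕ) {b : ℕ} (hb : b ≠ 0) :
    ∃ g : ℂ → ℂ, AnalyticAt ℂ g z₀ ∧ g z₀ = 1 ∧ ∀ z, g z ^ b = f z ^ a := by
  refine ⟨fun z => f z ^ ((a : ℂ) / b), hf.cpow analyticAt_const ?_, by simp [hf₀], fun z => ?_⟩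
  · simp [hf₀]
  · rw [← Complex.cpow_nat_mul, mul_div_cancel₀ _ (Nat.cast_ne_zero.mpr hb), Complex.cpow_natCast]

theorem AnalyticAt.exists_eq_id_mul {ζ : ℂ → ℂ} (hζ : AnalyticAt ℂ ζ 0) (hζ₀ : ζ 0 = 0) :
    ∃ h : ℂ → ℂ, AnalyticAt ℂ h 0 ∧ h 0 = deriv ζ 0 ∧ ζ = fun z => z * h z := by
  obtain ⟨p, hp⟩ := hζ
  refine ⟨dslope ζ 0, ⟨_, hp.has_fpower_series_dslope_fslope⟩, dslope_same ζ 0, funext fun z => ?_⟩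
  simpa [hζ₀] using (sub_smul_dslope ζ 0 z).symm

theorem zpow_mul_pow_eq_of_mul_deriv_eq {m r : ℕ} (hm : 0 < m) (hr : 0 < r)
    {z h h' ψ ψ' : ℂ} (hh : h ≠ 0) (hpow : ψ ^ r = h ^ m)
    (hderiv : r * ψ ^ (r - 1) * ψ' = m * h ^ (m - 1) * h') :
    (m : ℂ) ^ r * ((z * h) ^ ((m : ℤ) - r) * (h + z * h') ^ r) =
      z ^ ((m : ℤ) - r) * (m * ψ + r * (z * ψ')) ^ r := by
  have hψ : ψ ≠ 0 := by
    rintro rfl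
    exact pow_ne_zero m hh (by rw [← hpow, zero_pow hr.ne'])
  have hlog : (r : ℂ) * ψ' * h = m * h' * ψ := by
    obtain ⟨m, rfl⟩ := Nat.exists_eq_add_one_of_ne_zero hm.ne'
    obtain ⟨r, rfl⟩ := Nat.exists_eq_add_one_of_ne_zero hr.ne'
    simp only [Nat.add_sub_cancel, pow_succ] at hpow hderiv
    push_cast at hderiv ⊢
    refine mul_left_cancel₀ (mul_ne_zero (pow_ne_zero r hψ) hψ) ?_
    linear_combination (ψ * h) * hderiv - ((m + 1 : ℂ) * h' * ψ) * hpow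
  have hE : (m : ℂ) * ψ + r * (z * ψ') = m * ψ * (h + z * h') / h := by
    rw [eq_div_iff hh]
    linear_combination z * hlog
  rw [hE, div_pow, mul_pow, mul_pow, mul_zpow, zpow_sub₀ hh, zpow_natCast, zpow_natCast, ← hpow]
  field_simp

theorem eventually_zpow_mul_deriv_pow_eq {m r : ℕ} (hm : 0 < m) (hr : 0 < r) {h ψ : ℂ → ℂ}
    (hh : AnalyticAt ℂ h 0) (hψ : AnalyticAt ℂ ψ 0) (hh₀ : h 0 ≠ 0)
    (hpow : ∀ z, ψ z ^ r = h z ^ m) :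
    ∀ᶠ z in 𝓝 0, (m : ℂ) ^ r * ((z * h z) ^ ((m : ℤ) - r) * deriv (fun w => w * h w) z ^ r) =
      z ^ ((m : ℤ) - r) * eulerOperator m r ψ z ^ r := by
  filter_upwards [hh.eventually_analyticAt, hψ.eventually_analyticAt,
    hh.continuousAt.eventually_ne hh₀] with z hhz hψz hhz₀
  have hderiv : HasDerivAt (fun w => w * h w) (1 * h z + z * deriv h z) z :=
    (hasDerivAt_id' z).mul hhz.differentiableAt.hasDerivAt
  have hpow' : deriv (fun w => ψ w ^ r) z = deriv (fun w => h w ^ m) z := by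
    simp only [hpow]
  rw [deriv_fun_pow hψz.differentiableAt, deriv_fun_pow hhz.differentiableAt] at hpow'
  rw [hderiv.deriv, one_mul, eulerOperator]
  exact zpow_mul_pow_eq_of_mul_deriv_eq hm hr hhz₀ (hpow z) hpow'

theorem exists_zpow_mul_deriv_pow_eq {m r : ℕ} (hm : 0 < m) (hr : 0 < r) {β : ℂ → ℂ}
    (hβ : AnalyticAt ℂ β 0) (hβ₀ : β 0 = 1) :
    ∃ ζ : ℂ → ℂ, AnalyticAt ℂ ζ 0 ∧ ζ 0 = 0 ∧ deriv ζ 0 = 1 ∧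
      ∀ᶠ z in 𝓝[≠] 0, ζ z ^ ((m : ℤ) - r) * deriv ζ z ^ r = z ^ ((m : ℤ) - r) * β z := by
  obtain ⟨γ, hγ, hγ₀, hγpow⟩ := hβ.exists_pow_eq_pow hβ₀ 1 hr.ne'
  obtain ⟨ψ, hψ, hψ₀, hψγ⟩ := exists_eulerOperator_eq hm r hγ
  obtain ⟨h, hh, hh₀, hhpow⟩ := hψ.exists_pow_eq_pow (hψ₀.trans hγ₀) r hm.ne'
  refine ⟨fun z => z * h z, analyticAt_id.mul hh, zero_mul _, ?_, ?_⟩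
  · have hderiv : HasDerivAt (fun w => w * h w) (1 * h 0 + 0 * deriv h 0) 0 :=
      (hasDerivAt_id' 0).mul hh.differentiableAt.hasDerivAt
    simp [hderiv.deriv, hh₀]
  · have hE := eventually_zpow_mul_deriv_pow_eq hm hr hh hψ (by simp [hh₀]) fun z => (hhpow z).symm
    filter_upwards [nhdsWithin_le_nhds hE, nhdsWithin_le_nhds hψγ] with z hz hψz
    refine mul_left_cancel₀ (pow_ne_zero r (Nat.cast_ne_zero.mpr hm.ne')) ?_
    rw [hz, hψz, mul_pow, hγpow, pow_one]
    ring

theorem eventuallyEq_of_zpow_mul_deriv_pow_eq {m r : ℕ} (hm : 0 < m) (hr : 0 < r)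
    {ζ₁ ζ₂ : ℂ → ℂ} (hζ₁ : AnalyticAt ℂ ζ₁ 0) (hζ₂ : AnalyticAt ℂ ζ₂ 0)
    (hζ₁₀ : ζ₁ 0 = 0) (hζ₂₀ : ζ₂ 0 = 0) (hζ₁' : deriv ζ₁ 0 = 1) (hζ₂' : deriv ζ₂ 0 = 1)
    (h : ∀ᶠ z in 𝓝[≠] 0,
      ζ₁ z ^ ((m : ℤ) - r) * deriv ζ₁ z ^ r = ζ₂ z ^ ((m : ℤ) - r) * deriv ζ₂ z ^ r) :
    ζ₁ =ᶠ[𝓝 0] ζ₂ := by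
  obtain ⟨h₁, hh₁, hh₁₀, rfl⟩ := hζ₁.exists_eq_id_mul hζ₁₀
  obtain ⟨h₂, hh₂, hh₂₀, rfl⟩ := hζ₂.exists_eq_id_mul hζ₂₀
  rw [hζ₁'] at hh₁₀
  rw [hζ₂'] at hh₂₀
  obtain ⟨ψ₁, hψ₁, hψ₁₀, hψ₁pow⟩ := hh₁.exists_pow_eq_pow hh₁₀ m hr.ne'
  obtain ⟨ψ₂, hψ₂, hψ₂₀, hψ₂pow⟩ := hh₂.exists_pow_eq_pow hh₂₀ m hr.ne'
  have hE₁ := eventually_zpow_mul_deriv_pow_eq hm hr hh₁ hψ₁ (by simp [hh₁₀]) hψ₁pow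
  have hE₂ := eventually_zpow_mul_deriv_pow_eq hm hr hh₂ hψ₂ (by simp [hh₂₀]) hψ₂pow
  have hE : eulerOperator m r ψ₁ =ᶠ[𝓝 0] eulerOperator m r ψ₂ := by
    refine eventuallyEq_of_pow_eventuallyEq hr.ne' (hψ₁.continuousAt_eulerOperator m r)
      (hψ₂.continuousAt_eulerOperator m r) (by simp [hψ₁₀, hψ₂₀]) (by simp [hψ₂₀, hm.ne']) ?_
    rw [← nhdsNE_sup_pure, eventually_sup, eventually_pure]
    refine ⟨?_, by simp [hψ₁₀, hψ₂₀]⟩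
    filter_upwards [h, self_mem_nhdsWithin, nhdsWithin_le_nhds hE₁, nhdsWithin_le_nhds hE₂]
      with z hz hz₀ hz₁ hz₂
    refine mul_left_cancel₀ (zpow_ne_zero ((m : ℤ) - r) hz₀) ?_
    rw [← hz₁, ← hz₂]
    exact congrArg _ hz
  have hψ : ψ₁ =ᶠ[𝓝 0] ψ₂ := eventuallyEq_of_eulerOperator_eventuallyEq hm hr
    (hψ₁.eventually_analyticAt.mono fun _ hz => hz.differentiableAt)
    (hψ₂.eventually_analyticAt.mono fun _ hz => hz.differentiableAt) hE
  have hh : h₁ =ᶠ[𝓝 0] h₂ := eventuallyEq_of_pow_eventuallyEq hm.ne' hh₁.continuousAt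
    hh₂.continuousAt (hh₁₀.trans hh₂₀.symm) (by simp [hh₂₀])
    (hψ.mono fun z hz => by rw [← hψ₁pow, ← hψ₂pow, hz])
  exact hh.mono fun z hz => congrArg (z * ·) hz

/-- normal form of the meromorphic `r`-differential
`z^m α(z) (dz/z)^r`: existence and uniqueness of the normalizing coordinate. -/
theorem normalizing_coordinate_exists_unique
    (U : Set ℂ) (hU : IsOpen U) (h0 : (0 : ℂ) ∈ U)
    (α : ℂ → ℂ) (hα : DifferentiableOn ℂ α U) (hα0 : ∀ z ∈ U, α z ≠ 0)
    (m r : ℕ) (hm : 0 < m) (hr : 0 < r) :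
    (∃ U₁ : Set ℂ, IsOpen U₁ ∧ (0 : ℂ) ∈ U₁ ∧ U₁ ⊆ U ∧
      ∃ ζ : ℂ → ℂ, DifferentiableOn ℂ ζ U₁ ∧ ζ 0 = 0 ∧ deriv ζ 0 = 1 ∧
        ∀ z ∈ U₁, z ≠ 0 →
          ζ z ^ ((m : ℤ) - r) * (deriv ζ z) ^ r * α 0 = z ^ ((m : ℤ) - r) * α z) ∧
    (∀ (U₁ U₂ : Set ℂ) (ζ₁ ζ₂ : ℂ → ℂ),
      IsOpen U₁ → (0 : ℂ) ∈ U₁ → U₁ ⊆ U →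
      IsOpen U₂ → (0 : ℂ) ∈ U₂ → U₂ ⊆ U →
      DifferentiableOn ℂ ζ₁ U₁ → ζ₁ 0 = 0 → deriv ζ₁ 0 = 1 →
      (∀ z ∈ U₁, z ≠ 0 →
        ζ₁ z ^ ((m : ℤ) - r) * (deriv ζ₁ z) ^ r * α 0 = z ^ ((m : ℤ) - r) * α z) →
      DifferentiableOn ℂ ζ₂ U₂ → ζ₂ 0 = 0 → deriv ζ₂ 0 = 1 →
      (∀ z ∈ U₂, z ≠ 0 →
        ζ₂ z ^ ((m : ℤ) - r) * (deriv ζ₂ z) ^ r * α 0 = z ^ ((m : ℤ) - r) * α z) →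
      ∃ U₃ : Set ℂ, IsOpen U₃ ∧ (0 : ℂ) ∈ U₃ ∧ Set.EqOn ζ₁ ζ₂ U₃) := by
  have hα₀ : α 0 ≠ 0 := hα0 0 h0
  refine ⟨?_, fun U₁ U₂ ζ₁ ζ₂ hU₁ h₁ _ hU₂ h₂ _ hζ₁ hζ₁₀ hζ₁' heq₁ hζ₂ hζ₂₀ hζ₂' heq₂ => ?_⟩
  · obtain ⟨ζ, hζ, hζ₀, hζ', heq⟩ := exists_zpow_mul_deriv_pow_eq hm hr (β := fun z => α z / α 0)
      ((hα.analyticAt (hU.mem_nhds h0)).div analyticAt_const hα₀) (div_self hα₀)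
    obtain ⟨U₁, hU₁, hU₁o, h₁⟩ := eventually_nhds_iff.mp <| hζ.eventually_analyticAt.and <|
      (hU.eventually_mem h0).and (eventually_nhdsWithin_iff.mp heq)
    refine ⟨U₁, hU₁o, h₁, fun z hz => (hU₁ z hz).2.1, ζ, fun z hz =>
      (hU₁ z hz).1.differentiableAt.differentiableWithinAt, hζ₀, hζ', fun z hz hz₀ => ?_⟩
    rw [(hU₁ z hz).2.2 hz₀, mul_assoc, div_mul_cancel₀ _ hα₀]
  · have hpunct {V : Set ℂ} (hV : IsOpen V) (h₀ : (0 : ℂ) ∈ V) {P : ℂ → Prop}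
        (hP : ∀ z ∈ V, z ≠ 0 → P z) : ∀ᶠ z in 𝓝[≠] 0, P z :=
      eventually_nhdsWithin_iff.mpr <| (hV.eventually_mem h₀).mono hP
    have heq := (hpunct hU₁ h₁ heq₁).and (hpunct hU₂ h₂ heq₂)
    have hζ := eventuallyEq_of_zpow_mul_deriv_pow_eq hm hr (hζ₁.analyticAt (hU₁.mem_nhds h₁))
      (hζ₂.analyticAt (hU₂.mem_nhds h₂)) hζ₁₀ hζ₂₀ hζ₁' hζ₂' <| heq.mono fun z hz =>
        mul_right_cancel₀ hα₀ (hz.1.trans hz.2.symm)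
    obtain ⟨U₃, hU₃, hU₃o, h₃⟩ := eventually_nhds_iff.mp hζ
    exact ⟨U₃, hU₃o, h₃, hU₃⟩
end
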